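/- The matrices Rₙ(t) satisfy the unitarity condition R(z)·R^t(−z) = 1 of Givental's fundamental solution: for every integer k ≥ 1 and every t ∈ ℝ, ∑_{ℓ=0}^{k} (−1)^ℓ · R_{k−ℓ}(t) · (R_ℓ(t))ᵀ = 0 (the zero 2×2 matrix), where (·)ᵀ denotes the matrix transpose. -/

import Mathlib

open Matrix

/-- `α₀ = 1` and, for `n ≥ 1`, `αₙ = ((-1)ⁿ/(8ⁿ·n!))·∏_{ℓ=1}^{n}(2ℓ-1)²`. -/
noncomputable def alph (n : ℕ) : ℝ :=
  ((-1) ^ n / (8 ^ n * Nat.factorial n)) * ∏ ℓ ∈ Finset.range n, ((2 * (ℓ : ℝ) + 1)) ^ 2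

/-- The coefficient matrices of Givental's fundamental solution for ℙ¹:
`R₀(t) = I` and, for `n ≥ 1`,
`Rₙ(t) = ((-1)ⁿ·αₙ/((2n-1)·2ⁿ))·exp(-n·t/2)·Mₙ` with
`(Mₙ)₊₊ = −1`, `(Mₙ)₊₋ = (-1)^{n+1}·2n·i`, `(Mₙ)₋₊ = 2n·i`,
`(Mₙ)₋₋ = (-1)^{n+1}` (index `+` is `0`, index `−` is `1`). -/
noncomputable def RM : ℕ → ℝ → Matrix (Fin 2) (Fin 2) ℂ
  | 0, _ => 1
  | (n + 1), t =>
      (((-1 : ℂ) ^ (n + 1) * ((alph (n + 1) : ℝ) : ℂ) /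
          ((2 * ((n : ℂ) + 1) - 1) * 2 ^ (n + 1))) *
        ((Real.exp (-(((n : ℝ) + 1)) * t / 2) : ℝ) : ℂ)) •
      !![-1, (-1 : ℂ) ^ (n + 2) * (2 * ((n : ℂ) + 1)) * Complex.I;
         (2 * ((n : ℂ) + 1)) * Complex.I, (-1 : ℂ) ^ (n + 2)]

/-!
Write `Rₙ(t) = gₙ(t) • Mₙ` with `gₙ(t) = (-1)ⁿαₙ e^{-nt/2} / ((2n-1)2ⁿ)`; this also covers `n = 0`,
where `g₀ = -1` and `M₀ = -1`. With `a = k - ℓ`, `b = ℓ` and `σ = (-1)ᵏ`, the product `M_a M_bᵀ` is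
`(σ - 4ab) • A + (σa - b) • B` for two matrices `A`, `B` depending only on `σ`, so it suffices that
both weighted sums `∑ (-1)^ℓ g_a g_b (σ - 4ab)` and `∑ (-1)^ℓ g_a g_b (σa - b)` vanish. Under
`ℓ ↦ k - ℓ` the weight `(-1)^ℓ g_a g_b` picks up the sign `σ`; this kills the second sum and reduces
the first to `∑ (-1)^ℓ g_a g_b (1 - 4ab)`. That sum telescopes by the recurrence
`16(n+1) g_{n+1} = (4n² - 1) e^{-t/2} gₙ`: `k` times its `ℓ`-th term is `G(ℓ+1) - G(ℓ)` with
`G(ℓ) = (-1)^ℓ g_a g_b · b(4a² - 1)`, and the boundary value `G(k)` cancels the last term `ℓ = k`.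
-/

open Finset Complex

section NegOnePowConvolution

theorem sum_range_neg_one_pow_mul_reflect {R : Type*} [CommRing R] (x h : ℕ → R) (k : ℕ) :
    ∑ ℓ ∈ range (k + 1), (-1) ^ ℓ * x (k - ℓ) * x ℓ * h ℓ =
      (-1) ^ k * ∑ ℓ ∈ range (k + 1), (-1) ^ ℓ * x (k - ℓ) * x ℓ * h (k - ℓ) := by
  rw [← sum_range_reflect, mul_sum]
  refine sum_congr rfl fun ℓ hℓ => ?_
  have hℓk : ℓ ≤ k := Nat.lt_succ_iff.mp (mem_range.mp hℓ)
  have hsign : (-1 : R) ^ (k - ℓ) = (-1) ^ k * (-1) ^ ℓ := by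
    rw [← pow_add, show k + ℓ = (k - ℓ) + 2 * ℓ by omega, pow_add, pow_mul]
    simp
  rw [add_tsub_cancel_right, Nat.sub_sub_self hℓk, hsign]
  ring

theorem sum_range_neg_one_pow_mul_eq_zero_of_reflect {R : Type*} [CommRing R] [NoZeroDivisors R]
    [CharZero R] (x h : ℕ → R) {k : ℕ} (hh : ∀ ℓ ≤ k, (-1) ^ k * h (k - ℓ) = -h ℓ) :
    ∑ ℓ ∈ range (k + 1), (-1) ^ ℓ * x (k - ℓ) * x ℓ * h ℓ = 0 := by
  refine CharZero.eq_neg_self_iff.mp ?_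
  calc _ = (-1) ^ k * ∑ ℓ ∈ range (k + 1), (-1) ^ ℓ * x (k - ℓ) * x ℓ * h (k - ℓ) :=
        sum_range_neg_one_pow_mul_reflect x h k
    _ = ∑ ℓ ∈ range (k + 1), (-1) ^ ℓ * x (k - ℓ) * x ℓ * ((-1) ^ k * h (k - ℓ)) := by
        rw [mul_sum]; exact sum_congr rfl fun _ _ => by ring
    _ = _ := by
        rw [← sum_neg_distrib]
        refine sum_congr rfl fun ℓ hℓ => ?_
        rw [hh ℓ (Nat.lt_succ_iff.mp (mem_range.mp hℓ))]
        ring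

theorem sum_range_neg_one_pow_mul_sign_mul_sub_eq_zero {R : Type*} [CommRing R] [NoZeroDivisors R]
    [CharZero R] (x : ℕ → R) (k : ℕ) :
    ∑ ℓ ∈ range (k + 1), (-1) ^ ℓ * x (k - ℓ) * x ℓ * ((-1) ^ k * (k - ℓ : ℕ) - ℓ) = 0 := by
  refine sum_range_neg_one_pow_mul_eq_zero_of_reflect x _ fun ℓ hℓ => ?_
  rw [Nat.sub_sub_self hℓ]
  linear_combination (ℓ : R) * (Even.neg_one_pow ⟨k, rfl⟩ : (-1 : R) ^ (k + k) = 1)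

variable {K : Type*} [Field K] [CharZero K] (x : ℕ → K) {q : K}

theorem sum_range_neg_one_pow_mul_one_sub_four_mul_eq_zero
    (hx : ∀ n : ℕ, 16 * ((n : K) + 1) * x (n + 1) = (2 * n + 1) * (2 * n - 1) * q * x n)
    {k : ℕ} (hk : k ≠ 0) :
    ∑ ℓ ∈ range (k + 1), (-1) ^ ℓ * x (k - ℓ) * x ℓ * (1 - 4 * (k - ℓ : ℕ) * ℓ) = 0 := by
  set G : ℕ → K := fun ℓ => (-1) ^ ℓ * x (k - ℓ) * x ℓ * ℓ * (4 * ((k - ℓ : ℕ) : K) ^ 2 - 1)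
  have hstep : ∀ ℓ ∈ range k,
      (k : K) * ((-1) ^ ℓ * x (k - ℓ) * x ℓ * (1 - 4 * (k - ℓ : ℕ) * ℓ)) = G (ℓ + 1) - G ℓ := by
    intro ℓ hℓ
    obtain ⟨m, hm⟩ : ∃ m, k - ℓ = m + 1 := ⟨k - ℓ - 1, by have := mem_range.mp hℓ; omega⟩
    have hk' : (k : K) = ℓ + m + 1 := by
      rw [show k = ℓ + m + 1 by omega]; push_cast; ring
    simp only [G, hm, show k - (ℓ + 1) = m by omega, hk']
    push_cast
    linear_combination (-1) ^ ℓ * x m * (4 * (m : K) ^ 2 - 1) / 16 * hx ℓ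
      - (-1) ^ ℓ * x ℓ * (4 * (ℓ : K) ^ 2 - 1) / 16 * hx m
  refine (mul_eq_zero.mp ?_).resolve_left (Nat.cast_ne_zero.mpr hk)
  rw [sum_range_succ, mul_add, mul_sum, sum_congr rfl hstep, sum_range_sub]
  simp only [G, tsub_self, tsub_zero, CharP.cast_eq_zero, pow_zero]
  ring

theorem sum_range_neg_one_pow_mul_sign_sub_four_mul_eq_zero
    (hx : ∀ n : ℕ, 16 * ((n : K) + 1) * x (n + 1) = (2 * n + 1) * (2 * n - 1) * q * x n)
    {k : ℕ} (hk : k ≠ 0) :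
    ∑ ℓ ∈ range (k + 1), (-1) ^ ℓ * x (k - ℓ) * x ℓ * ((-1) ^ k - 4 * (k - ℓ : ℕ) * ℓ) = 0 := by
  have hsign : ∑ ℓ ∈ range (k + 1), (-1) ^ ℓ * x (k - ℓ) * x ℓ * ((-1) ^ k - 1) = 0 :=
    sum_range_neg_one_pow_mul_eq_zero_of_reflect x _ fun _ _ => by
      linear_combination (Even.neg_one_pow ⟨k, rfl⟩ : (-1 : K) ^ (k + k) = 1)
  calc _ = ∑ ℓ ∈ range (k + 1), (-1) ^ ℓ * x (k - ℓ) * x ℓ * (1 - 4 * (k - ℓ : ℕ) * ℓ) +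
        ∑ ℓ ∈ range (k + 1), (-1) ^ ℓ * x (k - ℓ) * x ℓ * ((-1) ^ k - 1) := by
        rw [← sum_add_distrib]; exact sum_congr rfl fun _ _ => by ring
    _ = 0 := by rw [sum_range_neg_one_pow_mul_one_sub_four_mul_eq_zero x hx hk, hsign, add_zero]

end NegOnePowConvolution

noncomputable def giventalScalar (n : ℕ) (t : ℝ) : ℂ :=
  (-1) ^ n * (alph n : ℂ) / ((2 * n - 1) * 2 ^ n) * Real.exp (-n * t / 2)

noncomputable def giventalMatrix (n : ℕ) : Matrix (Fin 2) (Fin 2) ℂ :=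
  !![-1, (-1) ^ (n + 1) * (2 * n) * I; (2 * n) * I, (-1) ^ (n + 1)]

theorem RM_eq_smul (n : ℕ) (t : ℝ) : RM n t = giventalScalar n t • giventalMatrix n := by
  cases n with
  | zero =>
    ext i j
    fin_cases i <;> fin_cases j <;> simp [RM, giventalScalar, giventalMatrix, alph]
  | succ n =>
    rw [RM, giventalScalar, giventalMatrix]
    congr 2 <;> push_cast <;> ring_nf

theorem alph_succ (n : ℕ) :
    alph (n + 1) = -(2 * (n : ℝ) + 1) ^ 2 * alph n / (8 * ((n : ℝ) + 1)) := by
  unfold alph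
  rw [prod_range_succ, pow_succ, pow_succ, Nat.factorial_succ]
  have h8 : (8 : ℝ) ^ n ≠ 0 := by positivity
  have hfac : (n.factorial : ℝ) ≠ 0 := by positivity
  have hn : (n : ℝ) + 1 ≠ 0 := by positivity
  push_cast
  field_simp

theorem two_mul_natCast_sub_one_ne_zero (n : ℕ) : (2 * (n : ℂ) - 1) ≠ 0 := by
  intro h
  have h2 : ((2 * n : ℕ) : ℂ) = ((1 : ℕ) : ℂ) := by push_cast; linear_combination h
  have := Nat.cast_injective (R := ℂ) h2
  omega

theorem giventalScalar_succ (n : ℕ) (t : ℝ) :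
    16 * ((n : ℂ) + 1) * giventalScalar (n + 1) t =
      (2 * n + 1) * (2 * n - 1) * Real.exp (-t / 2) * giventalScalar n t := by
  have hexp :
      Real.exp (-((n + 1 : ℕ) : ℝ) * t / 2) = Real.exp (-n * t / 2) * Real.exp (-t / 2) := by
    rw [← Real.exp_add]; push_cast; ring_nf
  -- `field_simp` rewrites `2 * n - 1` as `n * 2 - 1` and only cancels it in that form
  have h1 : (n : ℂ) * 2 - 1 ≠ 0 := by rw [mul_comm]; exact two_mul_natCast_sub_one_ne_zero n
  have h2 : 2 * (n : ℂ) + 1 ≠ 0 := by exact_mod_cast Nat.succ_ne_zero (2 * n)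
  rw [giventalScalar, giventalScalar, alph_succ, hexp,
    show 2 * ((n + 1 : ℕ) : ℂ) - 1 = 2 * n + 1 by push_cast; ring]
  push_cast
  field_simp
  ring

theorem giventalMatrix_mul_transpose (a b : ℕ) :
    giventalMatrix a * (giventalMatrix b)ᵀ =
      ((-1) ^ (a + b) - 4 * a * b : ℂ) • !![(-1) ^ (a + b), 0; 0, 1] +
        ((-1) ^ (a + b) * a - b : ℂ) • !![0, 2 * I; -2 * I * (-1) ^ (a + b), 0] := by
  have hsq : (-1 : ℂ) ^ (a + b) * (-1) ^ (a + b) = 1 := by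
    rw [← pow_add]; exact Even.neg_one_pow ⟨_, rfl⟩
  ext i j
  fin_cases i <;> fin_cases j <;>
    simp only [giventalMatrix, Fin.zero_eta, Fin.isValue, Fin.mk_one, Matrix.mul_apply, of_apply,
      cons_val', cons_val_fin_one, cons_val_zero, cons_val_one, transpose_apply, Fin.sum_univ_two,
      smul_of, smul_cons, smul_eq_mul, Matrix.smul_empty, Matrix.add_apply, mul_neg, neg_mul,
      neg_neg, mul_one, one_mul, mul_zero, add_zero, zero_add]
  · linear_combination -hsq + 4 * a * b * (-1) ^ (a + b) * I_sq
  · ring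
  · linear_combination 2 * a * I * hsq
  · linear_combination 4 * a * b * I_sq

/-- Unitarity `R(z)·R^t(−z) = 1` of Givental's fundamental solution: for every
`k ≥ 1` and every real `t`, `∑_{ℓ=0}^{k} (−1)^ℓ·R_{k−ℓ}(t)·(R_ℓ(t))ᵀ = 0`. -/
theorem stmt9 (k : ℕ) (hk : 1 ≤ k) (t : ℝ) :
    ∑ ℓ ∈ Finset.range (k + 1), ((-1 : ℂ) ^ ℓ) • (RM (k - ℓ) t * (RM ℓ t)ᵀ) = 0 := by
  set x : ℕ → ℂ := fun n => giventalScalar n t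
  set σ : ℂ := (-1) ^ k
  have hterm : ∀ ℓ ∈ range (k + 1), (-1 : ℂ) ^ ℓ • (RM (k - ℓ) t * (RM ℓ t)ᵀ) =
      ((-1) ^ ℓ * x (k - ℓ) * x ℓ * (σ - 4 * (k - ℓ : ℕ) * ℓ)) • !![σ, 0; 0, 1] +
        ((-1) ^ ℓ * x (k - ℓ) * x ℓ * (σ * (k - ℓ : ℕ) - ℓ)) • !![0, 2 * I; -2 * I * σ, 0] := by
    intro ℓ hℓ
    rw [RM_eq_smul, RM_eq_smul, transpose_smul, Matrix.smul_mul, Matrix.mul_smul,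
      giventalMatrix_mul_transpose, Nat.sub_add_cancel (Nat.lt_succ_iff.mp (mem_range.mp hℓ))]
    simp only [x, σ, smul_add, smul_smul, mul_assoc]
  rw [sum_congr rfl hterm, sum_add_distrib, ← sum_smul, ← sum_smul,
    sum_range_neg_one_pow_mul_sign_sub_four_mul_eq_zero x (giventalScalar_succ · t) (by omega),
    sum_range_neg_one_pow_mul_sign_mul_sub_eq_zero, zero_smul, zero_smul, add_zero]
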